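/- If f: X → X is a bi-asymptotically c-expansive homeomorphism of a compact metric space, then the shift homeomorphism σ on the inverse limit space X_f (with the metric 𝖽((xₙ),(yₙ)) = Σ_{n∈ℤ} d(xₙ,yₙ)/2^{|n|}) is bi-asymptotically expansive. -/

import Mathlib

open Filter Topology Function

/-- A full orbit (element of the inverse limit) of `f`. -/
def FullOrbit {X : Type*} (f : X → X) (x : ℤ → X) : Prop := ∀ n : ℤ, f (x n) = x (n + 1)

/-- `f` is bi-asymptotically `c`-expansive with constant `c`. -/
def BiAsympCExpWith {X : Type*} [MetricSpace X] (f : X → X) (c : ℝ) : Prop :=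
  (∀ x y : ℤ → X, FullOrbit f x → FullOrbit f y →
      (∀ n : ℕ, dist (x n) (y n) ≤ c) →
      Tendsto (fun n : ℕ => dist (x n) (y n)) atTop (𝓝 0)) ∧
  (∀ x y : ℤ → X, FullOrbit f x → FullOrbit f y →
      (∀ n : ℕ, dist (x (-(n : ℤ))) (y (-(n : ℤ))) ≤ c) →
      Tendsto (fun n : ℕ => dist (x (-(n : ℤ))) (y (-(n : ℤ)))) atTop (𝓝 0))

/-- `f` is bi-asymptotically `c`-expansive (for some constant). -/
def BiAsympCExpansive {X : Type*} [MetricSpace X] (f : X → X) : Prop :=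
  ∃ c > 0, BiAsympCExpWith f c

/-- `f` has the shadowing property. -/
def Shadowing {X : Type*} [MetricSpace X] (f : X → X) : Prop :=
  ∀ ε > 0, ∃ δ > 0, ∀ x : ℕ → X, (∀ n : ℕ, dist (f (x n)) (x (n + 1)) ≤ δ) →
    ∃ y : X, ∀ n : ℕ, dist (f^[n] y) (x n) ≤ ε

/-- `x` is a non-wandering point of `f`. -/
def NonWandering {X : Type*} [TopologicalSpace X] (f : X → X) (x : X) : Prop :=
  ∀ U : Set X, IsOpen U → x ∈ U → ∃ n : ℕ, 0 < n ∧ (f^[n] '' U ∩ U).Nonempty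

/-- There is a finite `α`-chain from `x` to `y`. -/
def ChainRel {X : Type*} [MetricSpace X] (f : X → X) (α : ℝ) (x y : X) : Prop :=
  ∃ (n : ℕ) (z : ℕ → X), 0 < n ∧ z 0 = x ∧ z n = y ∧
    ∀ i < n, dist (f (z i)) (z (i + 1)) ≤ α

/-- `x` is a chain recurrent point of `f`. -/
def ChainRecurrent {X : Type*} [MetricSpace X] (f : X → X) (x : X) : Prop :=
  ∀ α > 0, ChainRel f α x x

/-- chain equivalence of chain recurrent points -/
def ChainEquiv {X : Type*} [MetricSpace X] (f : X → X) (x y : X) : Prop :=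
  ∀ α > 0, ChainRel f α x y ∧ ChainRel f α y x

/-- basic sets: chain equivalence classes of `CR(f)` -/
def IsBasicSet {X : Type*} [MetricSpace X] (f : X → X) (B : Set X) : Prop :=
  ∃ x : X, ChainRecurrent f x ∧ B = {y | ChainRecurrent f y ∧ ChainEquiv f x y}

/-- the stable set of `x`. -/
def Ws {X : Type*} [MetricSpace X] (f : X → X) (x : X) : Set X :=
  {y | Tendsto (fun n : ℕ => dist (f^[n] x) (f^[n] y)) atTop (𝓝 0)}

/-- the unstable set of a full orbit `x`. -/
def Wu {X : Type*} [MetricSpace X] (f : X → X) (x : ℤ → X) : Set X :=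
  {y₀ | ∃ y : ℤ → X, FullOrbit f y ∧ y 0 = y₀ ∧
    Tendsto (fun n : ℕ => dist (x (-(n : ℤ))) (y (-(n : ℤ)))) atTop (𝓝 0)}

/-- `g` restricted to `A` is topologically transitive. -/
def TopTransOn {X : Type*} [TopologicalSpace X] (g : X → X) (A : Set X) : Prop :=
  ∀ U V : Set X, IsOpen U → IsOpen V → (U ∩ A).Nonempty → (V ∩ A).Nonempty →
    ∃ n : ℕ, 0 < n ∧ (g^[n] '' (U ∩ A) ∩ (V ∩ A)).Nonempty

/-- `g` restricted to `A` is topologically mixing. -/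
def TopMixingOn {X : Type*} [TopologicalSpace X] (g : X → X) (A : Set X) : Prop :=
  ∀ U V : Set X, IsOpen U → IsOpen V → (U ∩ A).Nonempty → (V ∩ A).Nonempty →
    ∃ N : ℕ, ∀ n ≥ N, (g^[n] '' (U ∩ A) ∩ (V ∩ A)).Nonempty

/-- `g` is asymptotically expansive with constant `c`. -/
def AsympExpWith {X : Type*} [MetricSpace X] (g : X → X) (c : ℝ) : Prop :=
  ∀ x y : X, (∀ n : ℕ, dist (g^[n] x) (g^[n] y) ≤ c) →
    Tendsto (fun n : ℕ => dist (g^[n] x) (g^[n] y)) atTop (𝓝 0)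

/-- The metric `𝖽((xₙ),(yₙ)) = Σₙ d(xₙ,yₙ)/2^{|n|}` on bi-infinite sequences. -/
noncomputable def seqDist {X : Type*} [MetricSpace X] (x y : ℤ → X) : ℝ :=
  ∑' n : ℤ, dist (x n) (y n) / 2 ^ n.natAbs

lemma summable_bound (D : ℝ) : Summable (fun n : ℤ => D / 2 ^ n.natAbs) := by
  apply Summable.of_nat_of_neg
  · simpa [Int.natAbs_natCast, div_eq_mul_inv, inv_pow] using
      (summable_geometric_of_lt_one (by norm_num) (by norm_num : (2:ℝ)⁻¹ < 1)).mul_left D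
  · simpa [Int.natAbs_neg, div_eq_mul_inv, inv_pow] using
      (summable_geometric_of_lt_one (by norm_num) (by norm_num : (2:ℝ)⁻¹ < 1)).mul_left D

lemma aux_tendsto {X : Type*} [MetricSpace X] (D : ℝ)
    (hD : ∀ a b : X, dist a b ≤ D) (x y : ℤ → X)
    (h0 : Tendsto (fun n : ℕ => dist (x n) (y n)) atTop (𝓝 0)) :
    Tendsto (fun i : ℕ => seqDist (fun n => x (n + i)) (fun n => y (n + i)))
      atTop (𝓝 0) := by
  have key : Tendsto (fun i : ℕ => ∑' n : ℤ, dist (x (n + i)) (y (n + i)) / 2 ^ n.natAbs)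
      atTop (𝓝 (∑' n : ℤ, (0:ℝ))) := by
    apply tendsto_tsum_of_dominated_convergence (bound := fun n : ℤ => D / 2 ^ n.natAbs)
      (summable_bound D)
    · intro k
      have h1 : Tendsto (fun i : ℕ => dist (x (k + i)) (y (k + i))) atTop (𝓝 0) := by
        have h2 : Tendsto (fun i : ℕ => (k + (i:ℤ)).toNat) atTop atTop := by
          apply tendsto_atTop_atTop.2
          intro b
          exact ⟨b + k.natAbs, fun a ha => by omega⟩
        have := h0.comp h2
        apply this.congr'
        filter_upwards [eventually_ge_atTop k.natAbs] with i hi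
        simp only [comp_apply]
        congr 2 <;> omega
      have : Tendsto (fun i : ℕ => dist (x (k + i)) (y (k + i)) / 2 ^ k.natAbs)
          atTop (𝓝 (0 / 2 ^ k.natAbs)) := h1.div_const _
      simpa using this
    · filter_upwards with i k
      rw [Real.norm_eq_abs, abs_of_nonneg (by positivity)]
      exact div_le_div_of_nonneg_right (hD _ _) (by positivity)
  simpa [seqDist, tsum_zero] using key

lemma seqDist_neg {X : Type*} [MetricSpace X] (x y : ℤ → X) :
    seqDist (fun n => x (-n)) (fun n => y (-n)) = seqDist x y := by
  unfold seqDist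
  rw [← (Equiv.neg ℤ).tsum_eq (fun n : ℤ => dist (x n) (y n) / 2 ^ n.natAbs)]
  simp [Equiv.neg_apply, Int.natAbs_neg]


/-- If `f` is a bi-asymptotically `c`-expansive homeomorphism of a compact metric space, then the
shift on the inverse limit `X_f` (with the metric `seqDist`) is bi-asymptotically expansive
(with the same constant): both the shift and its inverse are asymptotically expansive. -/
theorem shift_biAsympExpansive {X : Type*} [MetricSpace X] [CompactSpace X]
    (f : X ≃ₜ X) (c : ℝ) (hc : 0 < c) (hexp : BiAsympCExpWith (⇑f) c) :
    (∀ x y : ℤ → X, FullOrbit (⇑f) x → FullOrbit (⇑f) y →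
        (∀ i : ℕ, seqDist (fun n => x (n + i)) (fun n => y (n + i)) ≤ c) →
        Tendsto (fun i : ℕ => seqDist (fun n => x (n + i)) (fun n => y (n + i)))
          atTop (𝓝 0)) ∧
    (∀ x y : ℤ → X, FullOrbit (⇑f) x → FullOrbit (⇑f) y →
        (∀ i : ℕ, seqDist (fun n => x (n - i)) (fun n => y (n - i)) ≤ c) →
        Tendsto (fun i : ℕ => seqDist (fun n => x (n - i)) (fun n => y (n - i)))
          atTop (𝓝 0)) := by
  obtain ⟨D, hD⟩ := Metric.isBounded_iff.1 (isCompact_univ : IsCompact (Set.univ : Set X)).isBounded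
  have hD' : ∀ a b : X, dist a b ≤ D := fun a b => hD trivial trivial
  have hsum : ∀ u v : ℤ → X, Summable (fun n : ℤ => dist (u n) (v n) / 2 ^ n.natAbs) :=
    fun u v => (summable_bound D).of_nonneg_of_le (fun n => by positivity)
      (fun n => div_le_div_of_nonneg_right (hD' _ _) (by positivity))
  have hterm : ∀ u v : ℤ → X, dist (u 0) (v 0) ≤ seqDist u v := by
    intro u v
    have := Summable.le_tsum (hsum u v) 0 (fun j _ => by positivity)
    simpa [seqDist] using this
  constructor
  · intro x y hx hy hle
    have h0 : Tendsto (fun n : ℕ => dist (x n) (y n)) atTop (𝓝 0) := by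
      apply hexp.1 x y hx hy
      intro n
      have := (hterm (fun m => x (m + n)) (fun m => y (m + n))).trans (hle n)
      simpa using this
    exact aux_tendsto D hD' x y h0
  · intro x y hx hy hle
    have h0 : Tendsto (fun n : ℕ => dist (x (-(n:ℤ))) (y (-(n:ℤ)))) atTop (𝓝 0) := by
      apply hexp.2 x y hx hy
      intro n
      have := (hterm (fun m => x (m - n)) (fun m => y (m - n))).trans (hle n)
      simpa using this
    have h1 := aux_tendsto D hD' (fun n => x (-n)) (fun n => y (-n)) h0
    apply h1.congr
    intro i
    have := seqDist_neg (fun n => x (n - i)) (fun n => y (n - i))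
    rw [← this]
    congr 1 <;> funext n <;> ring_nf
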